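/- For any closed subset H ⊆ ℝ^k, the quotient of ((D^k ∩ H) × S^m) by the equivalence relation generated by (u,y) ∼ (u,y') for u ∈ ∂D^k is homeomorphic to S^{k+m} ∩ (H × ℝ^m). The homeomorphism is given by [(u,y)] ↦ (u, √(1−|u|²)·y). -/
import Mathlib


/-- For any closed `H ⊆ ℝ^k`, the quotient of `(D^k ∩ H) × S^m` by the
equivalence relation generated by `(u,y) ∼ (u,y')` for `u ∈ ∂D^k` is homeomorphic to
`S^{k+m} ∩ (H × ℝ^{m+1})`, via `[(u,y)] ↦ (u, √(1−|u|²)·y)`. -/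
theorem stmt1 (k m : ℕ) (H : Set (EuclideanSpace ℝ (Fin k))) (hH : IsClosed H) :
    ∃ φ :
      Quot (fun p q :
          {u : EuclideanSpace ℝ (Fin k) // ‖u‖ ≤ 1 ∧ u ∈ H} ×
            (Metric.sphere (0 : EuclideanSpace ℝ (Fin (m + 1))) 1) =>
        ‖(p.1 : EuclideanSpace ℝ (Fin k))‖ = 1 ∧ p.1 = q.1) ≃ₜ
      {p : EuclideanSpace ℝ (Fin k) × EuclideanSpace ℝ (Fin (m + 1)) //
        ‖p.1‖ ^ 2 + ‖p.2‖ ^ 2 = 1 ∧ p.1 ∈ H},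
      ∀ p, ((φ (Quot.mk _ p) :
          EuclideanSpace ℝ (Fin k) × EuclideanSpace ℝ (Fin (m + 1)))) =
        ((p.1 : EuclideanSpace ℝ (Fin k)),
          Real.sqrt (1 - ‖(p.1 : EuclideanSpace ℝ (Fin k))‖ ^ 2) •
            (p.2 : EuclideanSpace ℝ (Fin (m + 1)))) := by
  classical
  have mem_f : ∀ p : {u : EuclideanSpace ℝ (Fin k) // ‖u‖ ≤ 1 ∧ u ∈ H} ×
      (Metric.sphere (0 : EuclideanSpace ℝ (Fin (m + 1))) 1),
      ‖(p.1 : EuclideanSpace ℝ (Fin k))‖ ^ 2 +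
      ‖Real.sqrt (1 - ‖(p.1 : EuclideanSpace ℝ (Fin k))‖ ^ 2) •
        (p.2 : EuclideanSpace ℝ (Fin (m + 1)))‖ ^ 2 = 1 ∧
      (p.1 : EuclideanSpace ℝ (Fin k)) ∈ H := by
    rintro ⟨⟨u, hu1, huH⟩, ⟨y, hy⟩⟩
    have hy' : ‖y‖ = 1 := by simpa using hy
    have h0 : (0:ℝ) ≤ 1 - ‖u‖ ^ 2 := by nlinarith [norm_nonneg u]
    refine ⟨?_, huH⟩
    simp only [norm_smul, Real.norm_eq_abs, abs_of_nonneg (Real.sqrt_nonneg _), hy']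
    rw [mul_one, Real.sq_sqrt h0]; ring
  let f : {u : EuclideanSpace ℝ (Fin k) // ‖u‖ ≤ 1 ∧ u ∈ H} ×
      (Metric.sphere (0 : EuclideanSpace ℝ (Fin (m + 1))) 1) →
      {p : EuclideanSpace ℝ (Fin k) × EuclideanSpace ℝ (Fin (m + 1)) //
        ‖p.1‖ ^ 2 + ‖p.2‖ ^ 2 = 1 ∧ p.1 ∈ H} :=
    fun p => ⟨((p.1 : EuclideanSpace ℝ (Fin k)),
      Real.sqrt (1 - ‖(p.1 : EuclideanSpace ℝ (Fin k))‖ ^ 2) •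
        (p.2 : EuclideanSpace ℝ (Fin (m + 1)))), mem_f p⟩
  have hf_resp : ∀ p q, (‖(p.1 : EuclideanSpace ℝ (Fin k))‖ = 1 ∧ p.1 = q.1) → f p = f q := by
    rintro p q ⟨h1, h2⟩
    have h1' : ‖(q.1 : EuclideanSpace ℝ (Fin k))‖ = 1 := h2 ▸ h1
    apply Subtype.ext
    simp only [f, h2, h1']
    norm_num
  have hf_cont : Continuous f := by
    apply Continuous.subtype_mk
    fun_prop
  haveI : CompactSpace {u : EuclideanSpace ℝ (Fin k) // ‖u‖ ≤ 1 ∧ u ∈ H} := by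
    apply isCompact_iff_compactSpace.mp
    show IsCompact {u : EuclideanSpace ℝ (Fin k) | ‖u‖ ≤ 1 ∧ u ∈ H}
    have : {u : EuclideanSpace ℝ (Fin k) | ‖u‖ ≤ 1 ∧ u ∈ H} =
        Metric.closedBall 0 1 ∩ H := by
      ext u; simp [Metric.mem_closedBall, dist_zero_right]
    rw [this]
    exact (isCompact_closedBall (0 : EuclideanSpace ℝ (Fin k)) 1).inter_right hH
  let g := Quot.lift f hf_resp
  have hg_surj : Function.Surjective g := by
    rintro ⟨⟨x, y⟩, hxy, hxH⟩
    simp only at hxy hxH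
    have hx1 : ‖x‖ ≤ 1 := by nlinarith [norm_nonneg x, norm_nonneg y, sq_nonneg ‖y‖]
    rcases eq_or_lt_of_le hx1 with h1 | h1
    · have hy0 : y = 0 := by
        have : ‖y‖ ^ 2 = 0 := by nlinarith
        simpa [pow_eq_zero_iff] using this
      refine ⟨Quot.mk _ (⟨x, hx1, hxH⟩, ⟨EuclideanSpace.single 0 1, by
        simp [EuclideanSpace.norm_single]⟩), ?_⟩
      apply Subtype.ext
      simp only [g, f]
      rw [Prod.mk.injEq]
      refine ⟨rfl, ?_⟩
      rw [h1, hy0]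
      norm_num
    · have h0 : (0:ℝ) < 1 - ‖x‖ ^ 2 := by nlinarith [norm_nonneg x]
      set c := Real.sqrt (1 - ‖x‖ ^ 2) with hc
      have hcpos : 0 < c := Real.sqrt_pos.mpr h0
      have hyc : ‖y‖ = c := by
        have h2 : ‖y‖ ^ 2 = c ^ 2 := by rw [hc, Real.sq_sqrt h0.le]; linarith
        nlinarith [norm_nonneg y, hcpos]
      have hmem : c⁻¹ • y ∈ Metric.sphere (0 : EuclideanSpace ℝ (Fin (m + 1))) 1 := by
        simp [norm_smul, hyc, abs_of_pos hcpos, inv_mul_cancel₀ hcpos.ne']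
      refine ⟨Quot.mk _ (⟨x, hx1, hxH⟩, ⟨c⁻¹ • y, hmem⟩), ?_⟩
      apply Subtype.ext
      simp only [g, f]
      rw [Prod.mk.injEq]
      exact ⟨rfl, by rw [← hc, smul_smul, mul_inv_cancel₀ hcpos.ne', one_smul]⟩
  have hg_inj : Function.Injective g := by
    intro a b
    induction a using Quot.ind with | _ p => ?_
    induction b using Quot.ind with | _ q => ?_
    intro h
    have h' := congrArg Subtype.val h
    simp only [g, f] at h'
    have hu : (p.1 : EuclideanSpace ℝ (Fin k)) = (q.1 : EuclideanSpace ℝ (Fin k)) :=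
      congrArg Prod.fst h'
    have hv := congrArg Prod.snd h'
    simp only at hv
    rcases eq_or_lt_of_le p.1.2.1 with h1 | h1
    · exact Quot.sound ⟨h1, Subtype.ext hu⟩
    · have h0 : (0:ℝ) < 1 - ‖(p.1 : EuclideanSpace ℝ (Fin k))‖ ^ 2 := by
        nlinarith [norm_nonneg (p.1 : EuclideanSpace ℝ (Fin k))]
      have hcpos : 0 < Real.sqrt (1 - ‖(p.1 : EuclideanSpace ℝ (Fin k))‖ ^ 2) :=
        Real.sqrt_pos.mpr h0
      rw [← hu] at hv
      have hy : (p.2 : EuclideanSpace ℝ (Fin (m + 1))) = (q.2 : EuclideanSpace ℝ (Fin (m + 1))) :=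
        smul_right_injective _ hcpos.ne' hv
      congr 1
      exact Prod.ext (Subtype.ext hu) (Subtype.ext hy)
  have hg_cont : Continuous g := continuous_quot_lift hf_resp hf_cont
  refine ⟨hg_cont.homeoOfEquivCompactToT2 (f := Equiv.ofBijective g ⟨hg_inj, hg_surj⟩),
    fun p => ?_⟩
  have h1 : ⇑(hg_cont.homeoOfEquivCompactToT2 (f := Equiv.ofBijective g ⟨hg_inj, hg_surj⟩)) = g := by
    exact rfl
  have h2 : g (Quot.mk _ p) = f p := rfl
  have h3 : (f p).val = ((p.1 : EuclideanSpace ℝ (Fin k)),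
      Real.sqrt (1 - ‖(p.1 : EuclideanSpace ℝ (Fin k))‖ ^ 2) •
        (p.2 : EuclideanSpace ℝ (Fin (m + 1)))) := rfl
  rw [h1, h2, h3]
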